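/- arXiv:2405.12763 — 4 statements merged into one kernel-verified Lean document; each statement's English description precedes it below -/
import Mathlib

section
/- Let S be a non-negatively graded ring which is graded-commutative. Then the following are equivalent: (1) S is Noetherian; (2) the even subring S^ev = ⊕_{n≥0} S^{2n} is Noetherian and S is finitely generated as a module over S^ev. -/
/-!
Let `S⁺ = ⊕ₙ 𝒜 (2n)` and let `π : S → S⁺` kill the odd-degree components. Since
`π (s * r) = π s * r` for `r ∈ S⁺`, every left ideal `J` of `S⁺` is recovered as `π (S J)`,
so ascending chains of ideals of `S⁺` embed into ascending chains of left ideals of `S`.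
For finite generation, choose finitely many odd-degree homogeneous `xⱼ` generating the left
ideal spanned by all odd-degree elements: the degree-`n` component of `∑ cⱼ xⱼ` is
`∑ (cⱼ)_{n - deg xⱼ} xⱼ`, and for odd `n` each `n - deg xⱼ` is even, so
`S = S⁺ · 1 + ∑ S⁺ xⱼ`. The converse is the usual tower argument.
-/

open DirectSum

theorem Subring.isNoetherianRing_of_retraction {S : Type*} [Ring S] [IsNoetherianRing S]
    (R : Subring S) (π : S →+ R) (hπ : ∀ r : R, π r = r)
    (hπ_mul : ∀ (s : S) (r : R), π (s * r) = π s * r) : IsNoetherianRing R := by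
  have comap_map (J : Ideal R) : (J.map R.subtype).comap R.subtype = J := by
    -- a left ideal of `S` containing `J` on which `π` takes values in `J`
    let M : Ideal S :=
      { carrier := {a | ∀ s, π (s * a) ∈ J}
        add_mem' := fun ha hb s => by simpa only [mul_add, map_add] using J.add_mem (ha s) (hb s)
        zero_mem' := fun s => by simp
        smul_mem' := fun c a ha s => by simpa only [smul_eq_mul, ← mul_assoc] using ha (s * c) }
    have hJM : J.map R.subtype ≤ M := by
      rw [Ideal.map_le_iff_le_comap]
      intro j hj s
      simpa only [Ideal.mem_comap, Subring.subtype_apply, hπ_mul] using J.mul_mem_left _ hj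
    refine le_antisymm (fun r hr => ?_) Ideal.le_comap_map
    simpa [hπ] using hJM hr 1
  have hmono : StrictMono (Ideal.map R.subtype : Ideal R → Ideal S) :=
    Monotone.strictMono_of_injective (fun _ _ => Ideal.map_mono)
      (Function.LeftInverse.injective comap_map)
  rw [isNoetherianRing_iff, isNoetherian_iff']
  exact hmono.wellFoundedGT

namespace GradedRing

variable {S : Type*} [Ring S] (𝒜 : ℕ → AddSubgroup S) [GradedRing 𝒜]

def evenSubring : Subring S where
  __ := ⨆ n : ℕ, 𝒜 (2 * n)
  one_mem' := AddSubgroup.mem_iSup_of_mem (S := fun n => 𝒜 (2 * n)) 0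
    (SetLike.one_mem_graded 𝒜)
  mul_mem' {a b} ha hb := by
    refine AddSubgroup.iSup_induction _ (C := fun a => a * b ∈ ⨆ n, 𝒜 (2 * n)) ha
      (fun m a ha => ?_) (by simp) fun a a' ha ha' => by
        simpa only [add_mul] using add_mem ha ha'
    refine AddSubgroup.iSup_induction _ (C := fun b => a * b ∈ ⨆ n, 𝒜 (2 * n)) hb
      (fun n b hb => ?_) (by simp) fun b b' hb hb' => by
        simpa only [mul_add] using add_mem hb hb'
    exact AddSubgroup.mem_iSup_of_mem (m + n) (by
      simpa only [mul_add] using SetLike.mul_mem_graded ha hb)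

theorem mem_evenSubring_of_mem {n : ℕ} {a : S} (hn : Even n) (ha : a ∈ 𝒜 n) :
    a ∈ evenSubring 𝒜 := by
  obtain ⟨k, rfl⟩ := hn
  exact AddSubgroup.mem_iSup_of_mem (S := fun n => 𝒜 (2 * n)) k (by rwa [two_mul])

noncomputable def evenProj : S →+ S :=
  (toAddMonoid fun n => if Even n then (𝒜 n).subtype else 0).comp
    (decomposeAddEquiv 𝒜).toAddMonoidHom

theorem evenProj_of_mem {n : ℕ} {a : S} (ha : a ∈ 𝒜 n) :
    evenProj 𝒜 a = if Even n then a else 0 := by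
  simp only [evenProj, AddMonoidHom.comp_apply, AddEquiv.coe_toAddMonoidHom,
    decomposeAddEquiv_apply, decompose_of_mem 𝒜 ha, toAddMonoid_of]
  split <;> simp

theorem evenProj_mem_evenSubring (a : S) : evenProj 𝒜 a ∈ evenSubring 𝒜 := by
  induction a using Decomposition.inductionOn 𝒜 with
  | zero => simp
  | homogeneous a =>
    rw [evenProj_of_mem 𝒜 a.2]
    split_ifs with hn
    exacts [mem_evenSubring_of_mem 𝒜 hn a.2, (evenSubring 𝒜).zero_mem]
  | add a b ha hb => simpa only [map_add] using add_mem ha hb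

theorem evenProj_eq_self {a : S} (ha : a ∈ evenSubring 𝒜) : evenProj 𝒜 a = a := by
  refine AddSubgroup.iSup_induction _ (C := fun a => evenProj 𝒜 a = a) ha
    (fun k a ha => ?_) (map_zero _) (fun a b ha hb => by rw [map_add, ha, hb])
  rw [evenProj_of_mem 𝒜 ha, if_pos (even_two_mul k)]

theorem evenProj_mul_of_mem {x : S} (hx : x ∈ evenSubring 𝒜) (s : S) :
    evenProj 𝒜 (s * x) = evenProj 𝒜 s * x := by
  refine AddSubgroup.iSup_induction _ (C := fun x => evenProj 𝒜 (s * x) = evenProj 𝒜 s * x) hx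
    (fun k x hx => ?_) (by simp) (fun x y hx hy => by rw [mul_add, map_add, hx, hy, mul_add])
  induction s using Decomposition.inductionOn 𝒜 with
  | zero => simp
  | @homogeneous i s =>
    have hparity : Even (i + 2 * k) ↔ Even i := by simp [Nat.even_add]
    rw [evenProj_of_mem 𝒜 (SetLike.mul_mem_graded s.2 hx), evenProj_of_mem 𝒜 s.2]
    simp only [hparity, ite_mul, zero_mul]
  | add s t hs ht => rw [add_mul, map_add, hs, ht, map_add, add_mul]

theorem isNoetherianRing_evenSubring [IsNoetherianRing S] : IsNoetherianRing (evenSubring 𝒜) :=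
  (evenSubring 𝒜).isNoetherianRing_of_retraction
    ((evenProj 𝒜).codRestrict (evenSubring 𝒜) (evenProj_mem_evenSubring 𝒜))
    (fun r => Subtype.ext (evenProj_eq_self 𝒜 r.2))
    (fun s r => Subtype.ext (evenProj_mul_of_mem 𝒜 r.2 s))

theorem coe_decompose_mul_mem_span {i n : ℕ} {x : S} (hx : x ∈ 𝒜 i) (hni : Odd n ↔ Odd i)
    (c : S) : (decompose 𝒜 (c * x) n : S) ∈ Submodule.span (evenSubring 𝒜) {x} := by
  rw [coe_decompose_mul_of_right_mem 𝒜 n hx]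
  split_ifs with hle
  · have hc : (decompose 𝒜 c (n - i) : S) ∈ evenSubring 𝒜 :=
      mem_evenSubring_of_mem 𝒜 ((Nat.even_sub' hle).mpr hni) (SetLike.coe_mem _)
    exact Submodule.mem_span_singleton.mpr ⟨⟨_, hc⟩, rfl⟩
  · exact zero_mem _

theorem mem_span_evenSubring_of_odd {T : Finset S} (hT : ∀ x ∈ T, ∃ i, Odd i ∧ x ∈ 𝒜 i)
    {n : ℕ} {b : S} (hn : Odd n) (hb : b ∈ 𝒜 n) (hbT : b ∈ Submodule.span S (T : Set S)) :
    b ∈ Submodule.span (evenSubring 𝒜) (T : Set S) := by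
  obtain ⟨f, -, hf⟩ := Submodule.mem_span_finset.mp hbT
  rw [← decompose_of_mem_same 𝒜 hb, ← hf, decompose_sum, DFinsupp.finsetSum_apply,
    AddSubmonoidClass.coe_finsetSum]
  refine sum_mem fun x hx => ?_
  obtain ⟨i, hi, hxi⟩ := hT x hx
  exact Submodule.span_mono (by simpa using hx)
    (coe_decompose_mul_mem_span 𝒜 hxi (iff_of_true hn hi) (f x))

theorem module_finite_evenSubring [IsNoetherianRing S] : Module.Finite (evenSubring 𝒜) S := by
  classical
  let T : Set S := {x | ∃ i, Odd i ∧ x ∈ 𝒜 i}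
  obtain ⟨T', hT'T, hspan⟩ := (Submodule.fg_span_iff_fg_span_finset_subset T).mp
    (IsNoetherian.noetherian (Submodule.span S T))
  refine ⟨insert 1 T', Submodule.eq_top_iff'.mpr fun a => ?_⟩
  induction a using Decomposition.inductionOn 𝒜 with
  | zero => exact zero_mem _
  | @homogeneous n b =>
    rcases Nat.even_or_odd n with hn | hn
    · have hb : (b : S) = (⟨b, mem_evenSubring_of_mem 𝒜 hn b.2⟩ : evenSubring 𝒜) • 1 :=
        (mul_one _).symm
      rw [hb]
      exact Submodule.smul_mem _ _ (Submodule.subset_span (by simp))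
    · have hbT' : (b : S) ∈ Submodule.span S (T' : Set S) :=
        hspan ▸ Submodule.subset_span ⟨n, hn, b.2⟩
      exact Submodule.span_mono (by simp)
        (mem_span_evenSubring_of_odd 𝒜 (fun _ hx => hT'T hx) hn b.2 hbT')
  | add a b ha hb => exact add_mem ha hb

end GradedRing

theorem stmt_0_general {S : Type*} [Ring S] (𝒜 : ℕ → AddSubgroup S) [GradedRing 𝒜]
    (Sev : Subring S)
    (hSev : (Sev : Set S) = ((⨆ n : ℕ, 𝒜 (2 * n) : AddSubgroup S) : Set S)) :
    IsNoetherianRing S ↔ IsNoetherianRing Sev ∧ Module.Finite Sev S := by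
  obtain rfl : Sev = GradedRing.evenSubring 𝒜 := SetLike.coe_injective hSev
  refine ⟨fun _ => ⟨GradedRing.isNoetherianRing_evenSubring 𝒜,
    GradedRing.module_finite_evenSubring 𝒜⟩, fun ⟨_, _⟩ => ?_⟩
  exact isNoetherianRing_iff.mpr (isNoetherian_of_tower (GradedRing.evenSubring 𝒜) inferInstance)

/-- Let `S` be a non-negatively graded ring which is graded-commutative
(for homogeneous `a ∈ Sᵐ`, `b ∈ Sⁿ` one has `a * b = (-1)^(m*n) * (b * a)`).
Let `Sev` be the even subring `⊕_{n ≥ 0} S^{2n}`.  Then `S` is Noetherian if and only if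
`Sev` is Noetherian and `S` is finitely generated as a module over `Sev`. -/
theorem stmt_0 {S : Type*} [Ring S] (𝒜 : ℕ → AddSubgroup S) [GradedRing 𝒜]
    (hcomm : ∀ (m n : ℕ) (a b : S), a ∈ 𝒜 m → b ∈ 𝒜 n →
      a * b = (-1 : S) ^ (m * n) * (b * a))
    (Sev : Subring S)
    (hSev : (Sev : Set S) = ((⨆ n : ℕ, 𝒜 (2 * n) : AddSubgroup S) : Set S)) :
    IsNoetherianRing S ↔ IsNoetherianRing Sev ∧ Module.Finite Sev S :=
  stmt_0_general 𝒜 Sev hSev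
end

section
/- Let S be a non-negatively graded commutative Noetherian ring and M a finitely generated non-negatively graded S-module. Suppose that S^0 either contains an infinite field or is a local ring with infinite residue field. Choose homogeneous elements x_1, …, x_t ∈ S of positive degrees generating S as an algebra over S^0, and set d = lcm{deg(x_1), …, deg(x_t)}. Then there exists a homogeneous element x ∈ S of degree d and an integer N such that for all n ≥ N the multiplication map M^n → M^{n+d}, m ↦ x·m, is injective. -/
/-!
Let `J` be the ideal generated by the `x i`; a homogeneous element of degree at least `k * d`
lies in `J ^ k`. Since `S⁰` contains infinitely many elements with pairwise unit differences, a
module over it is not a finite union of proper submodules, so some `S⁰`-linear combination `y` of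
the powers `x i ^ (d / deg x i)` avoids every associated prime of `M` not containing `J`. Every
associated prime of `ker y` is an associated prime of `M` containing `y`, hence contains `J`, so
`ker y` is killed by some `J ^ k`. Being a finitely generated graded submodule killed by all
elements of large degree, `ker y` vanishes in large degrees.
-/

theorem Submodule.exists_forall_notMem_of_pairwise_isUnit_sub {R E ι : Type*} [CommRing R]
    [AddCommGroup E] [Module R E] {U : Set R} (hU : U.Infinite)
    (hunit : U.Pairwise fun a b => IsUnit (a - b)) (s : Finset ι) (p : ι → Submodule R E)
    (hp : ∀ i ∈ s, p i ≠ ⊤) : ∃ v, ∀ i ∈ s, v ∉ p i := by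
  by_contra! hcover
  -- Some `p k` has finite index; in the finite quotient `a • v = b • v` for distinct `a b ∈ U`.
  obtain ⟨k, hk, hfin⟩ := Submodule.exists_finiteIndex_of_cover (p := p) (s := s) <|
    Set.eq_univ_of_forall fun v => by simpa using hcover v
  have : Finite (E ⧸ p k) := AddSubgroup.finite_quotient_of_finiteIndex
  have : Nontrivial (E ⧸ p k) := Submodule.Quotient.nontrivial_iff.mpr (hp k hk)
  obtain ⟨v, hv⟩ := exists_ne (0 : E ⧸ p k)
  obtain ⟨a, ha, b, hb, hab, heq⟩ :=
    hU.exists_ne_map_eq_of_mapsTo (f := (· • v)) (Set.mapsTo_univ _ _) Set.finite_univ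
  exact hv <| ((hunit ha hb hab).smul_eq_zero).mp <| by rw [sub_smul, heq, sub_self]

theorem IsLocalRing.exists_infinite_pairwise_isUnit_sub (R : Type*) [CommRing R] [IsLocalRing R]
    [Infinite (R ⧸ maximalIdeal R)] :
    ∃ U : Set R, U.Infinite ∧ U.Pairwise fun a b => IsUnit (a - b) := by
  have hsec := Function.surjInv_eq (Ideal.Quotient.mk_surjective (I := maximalIdeal R))
  refine ⟨Set.range (Function.surjInv (Ideal.Quotient.mk_surjective (I := maximalIdeal R))),
    Set.infinite_range_of_injective (Function.injective_surjInv _), ?_⟩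
  rintro _ ⟨a, rfl⟩ _ ⟨b, rfl⟩ hab
  refine notMem_maximalIdeal.mp fun hmem => hab ?_
  rw [← Ideal.Quotient.eq_zero_iff_mem, map_sub, hsec, hsec, sub_eq_zero] at hmem
  rw [hmem]

theorem IsField.exists_infinite_pairwise_isUnit_sub {K : Type*} [CommRing K] [Infinite K]
    (hK : IsField K) : ∃ U : Set K, U.Infinite ∧ U.Pairwise fun a b => IsUnit (a - b) := by
  let := hK.toField
  exact ⟨Set.univ, Set.infinite_univ, fun a _ b _ hab => (sub_ne_zero.mpr hab).isUnit⟩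

open DirectSum Filter

section GradedRing

variable {S σ : Type*} [CommRing S] [SetLike σ S] [AddSubgroupClass σ S] (𝒜 : ℕ → σ)
  [GradedRing 𝒜]

theorem GradedRing.exists_mem_forall_notMem_of_pairwise_isUnit_sub (R : Subring S)
    (hR : (R : Set S) ⊆ 𝒜 0) {U : Set R} (hU : U.Infinite)
    (hunit : U.Pairwise fun a b => IsUnit (a - b)) {ι : Type*} [Fintype ι] {z : ι → S} {d : ℕ}
    (hz : ∀ i, z i ∈ 𝒜 d) (s : Finset (Ideal S)) (hs : ∀ P ∈ s, ∃ i, z i ∉ P) :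
    ∃ y ∈ 𝒜 d, ∀ P ∈ s, y ∉ P := by
  classical
  let φ := Fintype.linearCombination R z
  obtain ⟨c, hc⟩ := Submodule.exists_forall_notMem_of_pairwise_isUnit_sub hU hunit s
    (fun P => (P.restrictScalars R).comap φ) fun P hP htop => by
      obtain ⟨i, hi⟩ := hs P hP
      have : φ (Pi.single i 1) ∈ P := (Submodule.eq_top_iff'.mp htop) (Pi.single i 1)
      simp_all [φ, Fintype.linearCombination_apply_single]
  refine ⟨φ c, ?_, hc⟩
  rw [Fintype.linearCombination_apply]
  exact sum_mem fun i _ => by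
    simpa [Subring.smul_def] using SetLike.mul_mem_graded (hR (c i).2) (hz i)

theorem GradedRing.exists_mem_forall_span_le_of_mem (R : Subring S) (hR : (R : Set S) ⊆ 𝒜 0)
    {U : Set R} (hU : U.Infinite) (hunit : U.Pairwise fun a b => IsUnit (a - b)) {ι : Type*}
    [Fintype ι] {x : ι → S} {dx : ι → ℕ} (hxdeg : ∀ i, x i ∈ 𝒜 (dx i)) {d : ℕ}
    (hdvd : ∀ i, dx i ∣ d) {s : Set (Ideal S)} (hs : s.Finite) (hprime : ∀ P ∈ s, P.IsPrime) :
    ∃ y ∈ 𝒜 d, ∀ P ∈ s, y ∈ P → Ideal.span (Set.range x) ≤ P := by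
  classical
  obtain ⟨y, hy, hyP⟩ := exists_mem_forall_notMem_of_pairwise_isUnit_sub 𝒜 R hR hU hunit
    (z := fun i => x i ^ (d / dx i))
    (fun i => by
      simpa [Nat.div_mul_cancel (hdvd i)] using SetLike.pow_mem_graded (d / dx i) (hxdeg i))
    (hs.toFinset.filter fun P => ¬ Ideal.span (Set.range x) ≤ P) fun P hP => by
      simp only [Finset.mem_filter, Set.Finite.mem_toFinset] at hP
      obtain ⟨i, hi⟩ : ∃ i, x i ∉ P := by
        by_contra! h
        exact hP.2 (Ideal.span_le.mpr (Set.range_subset_iff.mpr h))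
      exact ⟨i, fun h => hi ((hprime P hP.1).mem_of_pow_mem _ h)⟩
  refine ⟨y, hy, fun P hP hyP' => ?_⟩
  by_contra hle
  exact hyP P (by simp [hP, hle]) hyP'

theorem GradedRing.mem_span_of_mem_of_ne_zero {ι : Type*} {x : ι → S} {dx : ι → ℕ}
    (hxdeg : ∀ i, x i ∈ 𝒜 (dx i))
    (hgen : Subring.closure ((𝒜 0 : Set S) ∪ Set.range x) = ⊤) {n : ℕ} (hn : n ≠ 0) {a : S}
    (ha : a ∈ 𝒜 n) : a ∈ Ideal.span (Set.range x) := by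
  set J := Ideal.span (Set.range x)
  have hJ : J.IsHomogeneous 𝒜 := Ideal.homogeneous_span 𝒜 _ <| by
    rintro _ ⟨i, rfl⟩; exact ⟨dx i, hxdeg i⟩
  let π := Ideal.Quotient.mk J
  -- `𝒜 0 + J` is a subring containing the generators, hence everything: `a ≡ b (mod J)`, `b ∈ 𝒜 0`.
  have hle : Subring.closure ((𝒜 0 : Set S) ∪ Set.range x) ≤
      ((SetLike.GradeZero.subring 𝒜).map π).comap π := by
    rw [Subring.closure_le]
    rintro b (hb | ⟨i, rfl⟩)
    · exact Subring.mem_map.mpr ⟨b, hb, rfl⟩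
    · exact Subring.mem_map.mpr
        ⟨0, zero_mem _, by
          rw [map_zero, eq_comm, Ideal.Quotient.eq_zero_iff_mem]; exact Ideal.subset_span ⟨i, rfl⟩⟩
  rw [hgen] at hle
  obtain ⟨b, hb, hab⟩ := Subring.mem_map.mp (hle (Subring.mem_top a))
  have hdiff : a - b ∈ J := by simpa [π, Ideal.Quotient.eq, eq_comm] using hab
  simpa [decompose_of_mem_same 𝒜 ha, decompose_of_mem_ne 𝒜 hb (Ne.symm hn)] using hJ n hdiff

theorem GradedRing.mem_span_pow_of_mem {ι : Type*} [Fintype ι] {x : ι → S} {dx : ι → ℕ}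
    (hxdeg : ∀ i, x i ∈ 𝒜 (dx i))
    (hgen : Subring.closure ((𝒜 0 : Set S) ∪ Set.range x) = ⊤) {D : ℕ} (hD : 0 < D)
    (hdxD : ∀ i, dx i ≤ D) (k : ℕ) {n : ℕ} (hn : k * D ≤ n) {a : S} (ha : a ∈ 𝒜 n) :
    a ∈ Ideal.span (Set.range x) ^ k := by
  induction k generalizing n a with
  | zero => simp
  | succ k ih =>
    have haJ := mem_span_of_mem_of_ne_zero 𝒜 hxdeg hgen (by nlinarith) ha
    obtain ⟨c, rfl⟩ := (Submodule.mem_span_range_iff_exists_fun S).mp haJ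
    rw [← decompose_of_mem_same 𝒜 ha, decompose_sum, DFinsupp.finsetSum_apply,
      AddSubmonoidClass.coe_finsetSum, pow_succ]
    refine sum_mem fun i _ => ?_
    rw [smul_eq_mul, coe_decompose_mul_of_right_mem_of_le 𝒜 (hxdeg i) (by nlinarith [hdxD i])]
    have hk : k * D ≤ n - dx i := by have := hdxD i; rw [add_mul] at hn; omega
    exact Ideal.mul_mem_mul (ih hk (SetLike.coe_mem _)) (Ideal.subset_span ⟨i, rfl⟩)

end GradedRing

theorem Module.exists_pow_le_annihilator_of_forall_le_of_mem_associatedPrimes {R M : Type*}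
    [CommRing R] [AddCommGroup M] [Module R M] [IsNoetherianRing R] [Module.Finite R M]
    {J : Ideal R} (hJ : ∀ P ∈ associatedPrimes R M, J ≤ P) :
    ∃ k, J ^ k ≤ Module.annihilator R M := by
  refine Ideal.exists_pow_le_of_le_radical_of_fg ?_ (IsNoetherian.noetherian J)
  rw [← Ideal.sInf_minimalPrimes]
  exact le_sInf fun P hP =>
    hJ P (Module.associatedPrimes.minimalPrimes_annihilator_subset_associatedPrimes R M hP)

theorem Module.exists_pow_le_annihilator_ker_smul {R M : Type*}
    [CommRing R] [AddCommGroup M] [Module R M] [IsNoetherianRing R] [Module.Finite R M]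
    {J : Ideal R} {y : R} (hy : ∀ P ∈ associatedPrimes R M, y ∈ P → J ≤ P) :
    ∃ k, J ^ k ≤ (LinearMap.ker (y • LinearMap.id : M →ₗ[R] M)).annihilator := by
  set K := LinearMap.ker (y • LinearMap.id : M →ₗ[R] M)
  obtain ⟨k, hk⟩ := exists_pow_le_annihilator_of_forall_le_of_mem_associatedPrimes (M := K)
    fun P hP => by
      refine hy P (associatedPrimes.subset_of_injective K.injective_subtype hP) ?_
      obtain ⟨m, rfl⟩ := hP.2
      refine Ideal.le_radical (Submodule.mem_colon_singleton.mpr ?_)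
      exact (Submodule.mem_bot R).mpr (Subtype.ext (LinearMap.mem_ker.mp m.2))
  refine ⟨k, fun a ha => Submodule.mem_annihilator.mpr fun m hm => ?_⟩
  have := Module.mem_annihilator.mp (hk ha) ⟨m, hm⟩
  simpa using congrArg Subtype.val this

section GradedModule

variable {S M σ τ : Type*} [CommRing S] [AddCommGroup M] [Module S M] [SetLike σ S]
  (𝒜 : ℕ → σ) [SetLike τ M] [AddSubmonoidClass τ M] (ℳ : ℕ → τ) [Decomposition ℳ]
  [SetLike.GradedSMul 𝒜 ℳ]

theorem DirectSum.coe_decompose_smul_add_of_left_mem {a : S} {i : ℕ} (ha : a ∈ 𝒜 i) (m : M)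
    (j : ℕ) : (decompose ℳ (a • m) (i + j) : M) = a • (decompose ℳ m j : M) := by
  induction m using Decomposition.inductionOn ℳ with
  | zero => simp
  | @homogeneous k m =>
    have ham : a • (m : M) ∈ ℳ (i + k) := SetLike.GradedSMul.smul_mem ha m.2
    by_cases hjk : j = k
    · subst hjk
      rw [decompose_of_mem_same ℳ ham, decompose_of_mem_same ℳ m.2]
    · rw [decompose_of_mem_ne ℳ ham (by omega), decompose_of_mem_ne ℳ m.2 (Ne.symm hjk),
        smul_zero]
  | add m₁ m₂ ih₁ ih₂ =>
    simp only [smul_add, decompose_add, add_apply, AddMemClass.coe_add, ih₁, ih₂]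

theorem Submodule.isHomogeneous_ker_smul {y : S} {d : ℕ} (hy : y ∈ 𝒜 d) :
    (LinearMap.ker (y • LinearMap.id : M →ₗ[S] M)).IsHomogeneous ℳ := by
  intro i m hm
  have hym : y • m = 0 := by simpa using hm
  simp [← coe_decompose_smul_add_of_left_mem 𝒜 ℳ hy, hym]

variable [AddSubgroupClass σ S] [GradedRing 𝒜]

theorem DirectSum.coe_decompose_smul_of_right_mem_of_le (a : S) {m : M} {i n : ℕ}
    (hm : m ∈ ℳ i) (h : i ≤ n) :
    (decompose ℳ (a • m) n : M) = (decompose 𝒜 a (n - i) : S) • m := by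
  induction a using Decomposition.inductionOn 𝒜 with
  | zero => simp
  | @homogeneous k a =>
    have ham : (a : S) • m ∈ ℳ (k + i) := SetLike.GradedSMul.smul_mem a.2 hm
    by_cases hn : n = k + i
    · subst hn
      rw [decompose_of_mem_same ℳ ham, Nat.add_sub_cancel, decompose_of_mem_same 𝒜 a.2]
    · rw [decompose_of_mem_ne ℳ ham (Ne.symm hn), decompose_of_mem_ne 𝒜 a.2 (by omega),
        zero_smul]
  | add a₁ a₂ ih₁ ih₂ =>
    simp only [add_smul, decompose_add, add_apply, AddMemClass.coe_add, ih₁, ih₂]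

variable {𝒜 ℳ}

theorem Submodule.IsHomogeneous.exists_le_span_of_fg {N : Submodule S M}
    (hN : N.IsHomogeneous ℳ) (hfg : N.FG) :
    ∃ E, N ≤ span S {m | m ∈ N ∧ ∃ k ≤ E, m ∈ ℳ k} := by
  classical
  obtain ⟨G, rfl⟩ := hfg
  refine ⟨G.sup fun g => (decompose ℳ g).support.sup id, span_le.mpr fun g hg => ?_⟩
  rw [← sum_support_decompose ℳ g]
  refine sum_mem fun k hk => subset_span ⟨hN k (subset_span hg), k, ?_, SetLike.coe_mem _⟩
  exact (Finset.le_sup (f := id) hk).trans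
    (Finset.le_sup (f := fun g => (decompose ℳ g).support.sup id) hg)

theorem Submodule.IsHomogeneous.eventually_eq_zero {N : Submodule S M}
    (hN : N.IsHomogeneous ℳ) (hfg : N.FG)
    (hann : ∀ᶠ n in atTop, ∀ a ∈ 𝒜 n, a ∈ N.annihilator) :
    ∀ᶠ n in atTop, ∀ m ∈ N, m ∈ ℳ n → m = 0 := by
  obtain ⟨E, hE⟩ := hN.exists_le_span_of_fg hfg
  obtain ⟨D, hD⟩ := eventually_atTop.mp hann
  refine eventually_atTop.mpr ⟨E + D, fun n hn m hmN hm => ?_⟩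
  obtain ⟨r, f, g, rfl⟩ := mem_span_set'.mp (hE hmN)
  rw [← decompose_of_mem_same ℳ hm, decompose_sum, DFinsupp.finsetSum_apply,
    AddSubmonoidClass.coe_finsetSum]
  refine Finset.sum_eq_zero fun j _ => ?_
  obtain ⟨hgN, k, hkE, hgk⟩ := (g j).2
  rw [coe_decompose_smul_of_right_mem_of_le 𝒜 ℳ _ hgk (by omega)]
  exact mem_annihilator.mp (hD (n - k) (by omega) _ (SetLike.coe_mem _)) _ hgN

end GradedModule

/-- Let `S` be a non-negatively graded commutative Noetherian ring and
`M` a finitely generated non-negatively graded `S`-module (with grading `ℳ`, the pieces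
being modules over the degree-zero subring `S0`).  Suppose `S⁰` contains an infinite
field, or is local with infinite residue field.  Let `x 1, …, x t` be homogeneous
elements of positive degrees generating `S` as an algebra over `S⁰` and let
`d = lcm (deg x i)`.  Then there is a homogeneous element `y` of degree `d` such that the
multiplication map `ℳ n → ℳ (n + d)`, `m ↦ y • m`, is injective for all `n ≫ 0`. -/
theorem stmt_2 {S M : Type*} [CommRing S] [AddCommGroup M] [Module S M]
    (𝒜 : ℕ → AddSubgroup S) [GradedRing 𝒜] [IsNoetherianRing S]
    (S0 : Subring S) (hS0 : (S0 : Set S) = (𝒜 0 : Set S))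
    (ℳ : ℕ → Submodule S0 M) [SetLike.GradedSMul 𝒜 ℳ] [DirectSum.Decomposition ℳ]
    [Module.Finite S M]
    (h0 : (∃ K : Subring S, (K : Set S) ⊆ (𝒜 0 : Set S) ∧ IsField K ∧ Infinite K) ∨
      (IsLocalRing S0 ∧ ∀ 𝔪 : Ideal S0, 𝔪.IsMaximal → Infinite (S0 ⧸ 𝔪)))
    {t : ℕ} (x : Fin t → S) (dx : Fin t → ℕ) (hdx : ∀ i, 0 < dx i)
    (hxdeg : ∀ i, x i ∈ 𝒜 (dx i))
    (hgen : Subring.closure ((𝒜 0 : Set S) ∪ Set.range x) = ⊤) :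
    ∃ y ∈ 𝒜 (Finset.univ.lcm dx), ∃ N : ℕ, ∀ n ≥ N,
      (∀ m ∈ ℳ n, y • m ∈ ℳ (n + Finset.univ.lcm dx)) ∧
      (∀ m₁ ∈ ℳ n, ∀ m₂ ∈ ℳ n, y • m₁ = y • m₂ → m₁ = m₂) := by
  set d := Finset.univ.lcm dx
  have hdvd : ∀ i, dx i ∣ d := fun i => Finset.dvd_lcm (Finset.mem_univ i)
  have hd : 0 < d := Nat.pos_of_ne_zero (Finset.lcm_ne_zero_iff.mpr fun i _ => (hdx i).ne')
  obtain ⟨R, hR, U, hU, hunit⟩ : ∃ R : Subring S, (R : Set S) ⊆ 𝒜 0 ∧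
      ∃ U : Set R, U.Infinite ∧ U.Pairwise fun a b => IsUnit (a - b) := by
    rcases h0 with ⟨K, hK, hKf, hKinf⟩ | ⟨hloc, hres⟩
    · exact ⟨K, hK, hKf.exists_infinite_pairwise_isUnit_sub⟩
    · have := hres _ (IsLocalRing.maximalIdeal.isMaximal S0)
      exact ⟨S0, hS0.le, IsLocalRing.exists_infinite_pairwise_isUnit_sub S0⟩
  obtain ⟨y, hy, hyP⟩ := GradedRing.exists_mem_forall_span_le_of_mem 𝒜 R hR hU hunit hxdeg hdvd
    (associatedPrimes.finite S M) fun P hP => hP.isPrime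
  obtain ⟨k, hk⟩ := Module.exists_pow_le_annihilator_ker_smul hyP
  obtain ⟨N, hN⟩ := eventually_atTop.mp <|
    (Submodule.isHomogeneous_ker_smul 𝒜 ℳ hy).eventually_eq_zero (IsNoetherian.noetherian _)
      (eventually_atTop.mpr ⟨k * d, fun n hn a ha => hk (GradedRing.mem_span_pow_of_mem 𝒜 hxdeg
        hgen hd (fun i => Nat.le_of_dvd hd (hdvd i)) k hn ha)⟩)
  refine ⟨y, hy, N, fun n hn => ⟨fun m hm => ?_, fun m₁ hm₁ m₂ hm₂ h => ?_⟩⟩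
  · rw [add_comm]
    exact SetLike.GradedSMul.smul_mem hy hm
  · exact sub_eq_zero.mp (hN n hn _ (by simp [smul_sub, h]) (sub_mem hm₁ hm₂))
end

section
/- Let H be a non-negatively graded ring which is graded-commutative, and let M be a graded H-module which is Noetherian (equivalently, finitely generated, since its quotient ring will be Noetherian) as an H-module. Let a denote the annihilator ideal of M in H. Then the quotient ring H/a is a Noetherian ring. -/
/-!
Choose finitely many homogeneous generators `v₁, …, vₙ` of `M` and suppose `h • vᵢ = 0` for all
`i`. Comparing degrees, every homogeneous component `h_k` of `h` also kills each `vᵢ`. By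
graded-commutativity `h_k * s = ∑ ± s_n * h_k`, so the elements killed by `h_k` form a submodule;
it contains the generators, hence `h_k` and therefore `h` kill `M`, i.e. `h ∈ a`. So `H ⧸ a` is a
quotient of `H ⧸ ker (h ↦ (h • vᵢ)ᵢ)`, which embeds into the Noetherian module `Mⁿ`. Left
ideals of `H ⧸ a` are `H`-submodules, so they satisfy the ascending chain condition.
-/

open DirectSum

theorem isNoetherianRing_of_surjective_of_forall_smul_eq_zero {R S M ι : Type*} [Ring R] [Ring S]
    [AddCommGroup M] [Module R M] [IsNoetherian R M] [Finite ι] (φ : R →+* S)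
    (hφ : Function.Surjective φ) (v : ι → M) (hv : ∀ r : R, (∀ i, r • v i = 0) → φ r = 0) :
    IsNoetherianRing S := by
  have : RingHomSurjective φ := ⟨hφ⟩
  let f : R →ₗ[R] ι → M := LinearMap.pi fun i => LinearMap.toSpanSingleton R M (v i)
  have : IsNoetherian R (R ⧸ LinearMap.ker f) :=
    isNoetherian_of_linearEquiv f.quotKerEquivRange.symm
  have hker : LinearMap.ker f ≤ LinearMap.ker φ.toSemilinearMap := fun r hr =>
    hv r fun i => congr_fun hr i
  refine isNoetherian_of_surjective ((LinearMap.ker f).liftQ φ.toSemilinearMap hker) ?_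
  rw [Submodule.range_liftQ, LinearMap.range_eq_top]
  exact hφ

theorem exists_homogeneous_finset_span_eq_top {ι A M σ : Type*} [DecidableEq ι] [Semiring A]
    [AddCommMonoid M] [Module A M] [SetLike σ M] [AddSubmonoidClass σ M] (ℳ : ι → σ)
    [Decomposition ℳ] [Module.Finite A M] :
    ∃ T : Finset M, (∀ v ∈ T, ∃ i, v ∈ ℳ i) ∧ Submodule.span A (T : Set M) = ⊤ := by
  classical
  obtain ⟨S, hS⟩ := Module.Finite.fg_top (R := A) (M := M)
  refine ⟨S.biUnion fun s => (decompose ℳ s).support.image fun i => (decompose ℳ s i : M), ?_, ?_⟩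
  · simp only [Finset.mem_biUnion, Finset.mem_image]
    rintro _ ⟨s, -, i, -, rfl⟩
    exact ⟨i, SetLike.coe_mem _⟩
  · rw [eq_top_iff, ← hS, Submodule.span_le]
    intro s hs
    rw [SetLike.mem_coe, ← sum_support_decompose ℳ s]
    exact Submodule.sum_mem _ fun i hi => Submodule.subset_span <|
      Finset.mem_biUnion.2 ⟨s, hs, Finset.mem_image_of_mem _ hi⟩

section GradedModule

variable {ι A M σ σ' : Type*} [DecidableEq ι] [AddRightCancelMonoid ι] [Semiring A]
  [AddCommMonoid M] [Module A M] [SetLike σ A] [AddSubmonoidClass σ A] (𝒜 : ι → σ) [GradedRing 𝒜]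
  [SetLike σ' M] [AddSubmonoidClass σ' M] (ℳ : ι → σ') [SetLike.GradedSMul 𝒜 ℳ] [Decomposition ℳ]

theorem DirectSum.coe_decompose_smul_add_of_mem {a : A} {m : M} {j : ι} (hm : m ∈ ℳ j) (i : ι) :
    (decompose ℳ (a • m) (i + j) : M) = (decompose 𝒜 a i : A) • m := by
  classical
  have hmem (k : ι) : (decompose 𝒜 a k : A) • m ∈ ℳ (k + j) :=
    vadd_eq_add k j ▸ SetLike.GradedSMul.smul_mem (SetLike.coe_mem _) hm
  calc (decompose ℳ (a • m) (i + j) : M)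
      = ∑ k ∈ (decompose 𝒜 a).support, (decompose ℳ ((decompose 𝒜 a k : A) • m) (i + j) : M) := by
        conv_lhs => rw [← sum_support_decompose 𝒜 a, Finset.sum_smul]
        rw [decompose_sum, DFinsupp.finsetSum_apply, AddSubmonoidClass.coe_finsetSum]
    _ = (decompose 𝒜 a i : A) • m := by
        rw [Finset.sum_eq_single i]
        · exact decompose_of_mem_same ℳ (hmem i)
        · exact fun k _ hki => decompose_of_mem_ne ℳ (hmem k) (hki ∘ add_right_cancel)
        · intro hi
          rw [DFinsupp.notMem_support_iff.mp hi, ZeroMemClass.coe_zero, zero_smul, decompose_zero,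
            zero_apply, ZeroMemClass.coe_zero]

theorem DirectSum.decompose_smul_eq_zero_of_mem {a : A} {m : M} {j : ι} (hm : m ∈ ℳ j)
    (ha : a • m = 0) (i : ι) : (decompose 𝒜 a i : A) • m = 0 := by
  rw [← coe_decompose_smul_add_of_mem 𝒜 ℳ hm, ha, decompose_zero, zero_apply, ZeroMemClass.coe_zero]

end GradedModule

section GradedCommutative

variable {A M σ σ' : Type*} [Ring A] [AddCommGroup M] [Module A M] [SetLike σ A]
  [AddSubgroupClass σ A] (𝒜 : ℕ → σ) [GradedRing 𝒜]

def IsGradedCommutative : Prop :=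
  ∀ (m n : ℕ) (a b : A), a ∈ 𝒜 m → b ∈ 𝒜 n → a * b = (-1 : A) ^ (m * n) * (b * a)

variable {𝒜}

theorem IsGradedCommutative.smul_smul_eq_zero (h𝒜 : IsGradedCommutative 𝒜) {x : A} {k : ℕ}
    (hx : x ∈ 𝒜 k) {m : M} (hm : x • m = 0) (s : A) : x • s • m = 0 := by
  classical
  rw [smul_smul, ← sum_support_decompose 𝒜 s, Finset.mul_sum, Finset.sum_smul]
  refine Finset.sum_eq_zero fun n _ => ?_
  rw [h𝒜 k n x _ hx (SetLike.coe_mem _), mul_smul, mul_smul, hm, smul_zero, smul_zero]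

theorem IsGradedCommutative.smul_eq_zero_of_span_eq_top (h𝒜 : IsGradedCommutative 𝒜) {x : A}
    {k : ℕ} (hx : x ∈ 𝒜 k) {T : Set M} (hT : Submodule.span A T = ⊤) (hxT : ∀ v ∈ T, x • v = 0)
    (m : M) : x • m = 0 := by
  induction (hT ▸ Submodule.mem_top : m ∈ Submodule.span A T) using Submodule.span_induction with
  | mem v hv => exact hxT v hv
  | zero => exact smul_zero x
  | add u v _ _ hu hv => rw [smul_add, hu, hv, add_zero]
  | smul s v _ hv => exact h𝒜.smul_smul_eq_zero hx hv s

variable (ℳ : ℕ → σ') [SetLike σ' M] [AddSubmonoidClass σ' M] [SetLike.GradedSMul 𝒜 ℳ]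
  [Decomposition ℳ]

theorem IsGradedCommutative.smul_eq_zero_of_homogeneous_span_eq_top (h𝒜 : IsGradedCommutative 𝒜)
    {T : Set M} (hT_hom : ∀ v ∈ T, ∃ i, v ∈ ℳ i) (hT : Submodule.span A T = ⊤) {a : A}
    (haT : ∀ v ∈ T, a • v = 0) (m : M) : a • m = 0 := by
  classical
  rw [← sum_support_decompose 𝒜 a, Finset.sum_smul]
  refine Finset.sum_eq_zero fun k _ => ?_
  refine h𝒜.smul_eq_zero_of_span_eq_top (SetLike.coe_mem _) hT (fun v hv => ?_) m
  obtain ⟨i, hi⟩ := hT_hom v hv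
  exact decompose_smul_eq_zero_of_mem 𝒜 ℳ hi (haT v hv) k

end GradedCommutative

/-- Let `H` be a non-negatively graded ring which is graded-commutative,
and let `M` be a graded `H`-module which is Noetherian as an `H`-module.  Let `a` be the
(two-sided) annihilator ideal of `M` in `H`.  Then the quotient ring `H/a` is a
Noetherian ring. -/
theorem stmt_4 {H M : Type*} [Ring H] [AddCommGroup M] [Module H M]
    (𝒜 : ℕ → AddSubgroup H) [GradedRing 𝒜]
    (hcomm : ∀ (m n : ℕ) (a b : H), a ∈ 𝒜 m → b ∈ 𝒜 n →
      a * b = (-1 : H) ^ (m * n) * (b * a))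
    (ℳ : ℕ → AddSubgroup M) [SetLike.GradedSMul 𝒜 ℳ] [DirectSum.Decomposition ℳ]
    [IsNoetherian H M]
    (a : TwoSidedIdeal H) (ha : ∀ h : H, h ∈ a ↔ ∀ m : M, h • m = 0) :
    IsNoetherianRing a.ringCon.Quotient := by
  obtain ⟨T, hT_hom, hT⟩ := exists_homogeneous_finset_span_eq_top (A := H) ℳ
  refine isNoetherianRing_of_surjective_of_forall_smul_eq_zero a.ringCon.mk'
    a.ringCon.mk'_surjective (fun v : T => (v : M)) fun h hh => ?_
  have hmem : h ∈ a := (ha h).2 <| IsGradedCommutative.smul_eq_zero_of_homogeneous_span_eq_top ℳ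
    hcomm hT_hom hT fun v hv => hh ⟨v, hv⟩
  exact (RingCon.eq _).2 ((a.mem_iff h).1 hmem)
end

section
/- Let S be a non-negatively graded commutative Noetherian ring and M a finitely generated non-negatively graded S-module such that each graded component M^n has finite length as an S^0-module. Then either M^n = 0 for all sufficiently large n, or there exist integers d > 0 and m_0 and an integer j with 0 ≤ j < d such that M^n ≠ 0 for every n ≥ m_0 with n ≡ j (mod d). Moreover, d may be taken to be the least common multiple of the degrees of any set of homogeneous elements of positive degree generating S as an algebra over S^0. -/
/-!
Put `d = lcm (dx i)` and `y i = x i ^ (d / dx i)`, homogeneous of degree `d`. A monomial in the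
`x i` of degree `q > t * d` has some exponent `≥ d / dx i` (pigeonhole), so it is divisible by
some `y i`; hence `S^q = ∑ y i S^(q - d)` for `q > t * d`. As `M` is generated by finitely many
homogeneous elements, this gives `M^(n + d) = ∑ y i M^n` for `n ≫ 0`: a vanishing component
`M^n` with `n` large forces `M` to vanish along the rest of the residue class of `n` mod `d`.
If that happens in every residue class then `M^n = 0` for `n ≫ 0`; otherwise some residue
class has no vanishing component beyond some point.
-/

open DirectSum

namespace Nat

theorem exists_div_le_of_card_mul_lt_sum {ι : Type*} [Fintype ι] (e w : ι → ℕ) {d : ℕ}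
    (h : Fintype.card ι * d < ∑ i, e i * w i) : ∃ i, d / w i ≤ e i := by
  by_contra! hlt
  have hlt' (i : ι) : e i * w i < d := by
    have hw : 0 < w i := Nat.pos_of_ne_zero fun hw => by simpa [hw] using hlt i
    exact (Nat.mul_lt_mul_of_pos_right (hlt i) hw).trans_le (Nat.div_mul_le_self d (w i))
  have hle := Finset.sum_le_sum fun i (_ : i ∈ Finset.univ) => (hlt' i).le
  simp only [Finset.sum_const, Finset.card_univ, smul_eq_mul] at hle
  omega

theorem add_mul_of_imp_add {P : ℕ → Prop} {d N : ℕ} (hP : ∀ n ≥ N, P n → P (n + d))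
    {m : ℕ} (hm : N ≤ m) (hPm : P m) (k : ℕ) : P (m + d * k) := by
  induction k with
  | zero => simpa using hPm
  | succ k ih => simpa [Nat.mul_succ, ← add_assoc] using hP _ (hm.trans (Nat.le_add_right _ _)) ih

theorem eventually_or_exists_mod_eq_eventually_not {P : ℕ → Prop} {d N : ℕ} (hd : 0 < d)
    (hP : ∀ n ≥ N, P n → P (n + d)) :
    (∃ N', ∀ n ≥ N', P n) ∨ ∃ j < d, ∃ m₀, ∀ n ≥ m₀, n % d = j → ¬P n := by
  by_contra! h
  obtain ⟨hev, hres⟩ := h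
  choose m hmN hmod hPm using fun j : Fin d => hres j j.2 N
  obtain ⟨n, hn, hPn⟩ := hev (N + ∑ j, m j)
  set j : Fin d := ⟨n % d, Nat.mod_lt n hd⟩
  have hmn : m j ≤ n :=
    (Finset.single_le_sum (fun _ _ => Nat.zero_le _) (Finset.mem_univ j)).trans (by omega)
  obtain ⟨k, hk⟩ := (Nat.modEq_iff_dvd' hmn).mp (hmod j)
  exact hPn (by simpa [← hk, Nat.add_sub_cancel' hmn] using
    add_mul_of_imp_add hP (hmN j) (hPm j) k)

end Nat

theorem Subring.span_submonoidClosure_eq_top_of_closure_union_eq_top {S : Type*} [CommRing S]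
    (R : Subring S) {s : Set S} (h : Subring.closure ((R : Set S) ∪ s) = ⊤) :
    Submodule.span R (Submonoid.closure s : Set S) = ⊤ := by
  rw [← Algebra.adjoin_eq_span, Algebra.toSubmodule_eq_top, ← Algebra.toSubring_eq_top,
    Algebra.adjoin_eq_ring_closure]
  rwa [show Set.range (algebraMap R S) = R from Subtype.range_coe]

theorem prod_pow_mem_span_pow {S ι : Type*} [CommSemiring S] [Fintype ι] (x : ι → S)
    (w : ι → ℕ) {d : ℕ} (e : ι → ℕ) (h : Fintype.card ι * d < ∑ i, e i * w i) :
    ∏ i, x i ^ e i ∈ Ideal.span (Set.range fun i => x i ^ (d / w i)) := by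
  obtain ⟨i, hi⟩ := Nat.exists_div_le_of_card_mul_lt_sum e w h
  have hdvd : x i ^ (d / w i) ∣ ∏ j, x j ^ e j :=
    (pow_dvd_pow _ hi).trans (Finset.dvd_prod_of_mem _ (Finset.mem_univ i))
  exact Ideal.mem_of_dvd _ hdvd (Ideal.subset_span ⟨i, rfl⟩)

section GradedRing

variable {S : Type*} [CommRing S] (𝒜 : ℕ → AddSubgroup S) [GradedRing 𝒜]

theorem mem_span_pow_of_mem_grade {ι : Type*} [Fintype ι] {x : ι → S} {w : ι → ℕ}
    (hx : ∀ i, x i ∈ 𝒜 (w i))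
    (hgen : Subring.closure ((𝒜 0 : Set S) ∪ Set.range x) = ⊤)
    {d q : ℕ} (hq : Fintype.card ι * d < q) {a : S} (ha : a ∈ 𝒜 q) :
    a ∈ Ideal.span (Set.range fun i => x i ^ (d / w i)) := by
  have hspan := Subring.span_submonoidClosure_eq_top_of_closure_union_eq_top
    (SetLike.GradeZero.subring 𝒜) hgen
  rw [← decompose_of_mem_same 𝒜 ha]
  clear ha
  induction (hspan ▸ Submodule.mem_top : a ∈ _) using Submodule.closure_induction with
  | zero => simp
  | add b c _ _ hb hc => simpa using add_mem hb hc
  | smul_mem c m hm =>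
    obtain ⟨e, rfl⟩ := Submonoid.exists_of_mem_closure_range x m hm
    have hdeg : ∏ i, x i ^ e i ∈ 𝒜 (∑ i, e i • w i) :=
      SetLike.prod_pow_mem_graded 𝒜 _ _ _ fun i _ => hx i
    rw [Submonoid.smul_def, smul_eq_mul, coe_decompose_mul_of_left_mem_zero 𝒜 c.2]
    refine Ideal.mul_mem_left _ _ ?_
    by_cases hdq : ∑ i, e i • w i = q
    · rw [← hdq, decompose_of_mem_same 𝒜 hdeg]
      exact prod_pow_mem_span_pow x w e (by simpa [← hdq] using hq)
    · simp [decompose_of_mem_ne 𝒜 hdeg hdq]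

theorem exists_eq_sum_mul_of_mem_span {ι : Type*} [Fintype ι] {y : ι → S} {d q : ℕ}
    (hy : ∀ i, y i ∈ 𝒜 d) (hdq : d ≤ q) {a : S} (ha : a ∈ 𝒜 q)
    (haI : a ∈ Ideal.span (Set.range y)) :
    ∃ b : ι → S, (∀ i, b i ∈ 𝒜 (q - d)) ∧ a = ∑ i, y i * b i := by
  obtain ⟨c, rfl⟩ := Ideal.mem_span_range_iff_exists_fun.mp haI
  refine ⟨fun i => decompose 𝒜 (c i) (q - d), fun i => SetLike.coe_mem _, ?_⟩
  rw [← decompose_of_mem_same 𝒜 ha, decompose_sum, DFinsupp.finsetSum_apply,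
    AddSubgroup.val_finsetSum]
  exact Finset.sum_congr rfl fun i _ => by
    rw [coe_decompose_mul_of_right_mem_of_le 𝒜 (hy i) hdq, mul_comm]

variable {M : Type*} [AddCommGroup M] [Module S M] {R : Type*} [Semiring R] [Module R M]
  (ℳ : ℕ → Submodule R M) [SetLike.GradedSMul 𝒜 ℳ] [Decomposition ℳ]

theorem coe_decompose_smul_of_mem_of_le (s : S) {g : M} {e n : ℕ} (hg : g ∈ ℳ e)
    (hen : e ≤ n) : (decompose ℳ (s • g) n : M) = (decompose 𝒜 s (n - e) : S) • g := by
  classical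
  have hmem (q : ℕ) : (decompose 𝒜 s q : S) • g ∈ ℳ (q + e) :=
    SetLike.GradedSMul.smul_mem (A := 𝒜) (B := ℳ) (decompose 𝒜 s q).2 hg
  conv_lhs => rw [← sum_support_decompose 𝒜 s, Finset.sum_smul]
  rw [decompose_sum, DFinsupp.finsetSum_apply, Submodule.coe_sum,
    Finset.sum_eq_single (n - e)]
  · have h := hmem (n - e)
    rw [Nat.sub_add_cancel hen] at h
    exact decompose_of_mem_same ℳ h
  · intro q _ hq
    rw [decompose_of_mem_ne ℳ (hmem q) (by omega)]
  · intro hs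
    simp [DFinsupp.notMem_support_iff.mp hs]

theorem exists_span_grade_le_eq_top [Module.Finite S M] :
    ∃ E, Submodule.span S {g | ∃ e ≤ E, g ∈ ℳ e} = ⊤ := by
  classical
  obtain ⟨G, hG⟩ := Module.Finite.fg_top (R := S) (M := M)
  refine ⟨G.sup fun g => (decompose ℳ g).support.sup id, eq_top_iff.mpr ?_⟩
  rw [← hG, Submodule.span_le]
  intro g hg
  rw [← sum_support_decompose ℳ g]
  refine Submodule.sum_mem _ fun e he => Submodule.subset_span ⟨e, ?_, SetLike.coe_mem _⟩
  exact (Finset.le_sup (f := id) he).trans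
    (Finset.le_sup (f := fun g => (decompose ℳ g).support.sup id) hg)

theorem exists_forall_ge_grade_add_eq_bot [Module.Finite S M] {ι : Type*} [Fintype ι]
    {y : ι → S} {d : ℕ} (hy : ∀ i, y i ∈ 𝒜 d) {N₀ : ℕ}
    (hI : ∀ q ≥ N₀, ∀ a ∈ 𝒜 q, a ∈ Ideal.span (Set.range y)) :
    ∃ N, ∀ n ≥ N, ℳ n = ⊥ → ℳ (n + d) = ⊥ := by
  obtain ⟨E, hE⟩ := exists_span_grade_le_eq_top ℳ (S := S)
  refine ⟨N₀ + E, fun n hn hbot => (Submodule.eq_bot_iff _).mpr fun m hm => ?_⟩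
  rw [← decompose_of_mem_same ℳ hm]
  clear hm
  induction (hE ▸ Submodule.mem_top : m ∈ _) using Submodule.closure_induction with
  | zero => simp
  | add m m' _ _ hm hm' => simp [hm, hm']
  | smul_mem s g hg =>
    obtain ⟨e, heE, hge⟩ := hg
    rw [coe_decompose_smul_of_mem_of_le 𝒜 ℳ s hge (by omega)]
    obtain ⟨b, hb, hsum⟩ := exists_eq_sum_mul_of_mem_span 𝒜 hy (by omega) (SetLike.coe_mem _)
      (hI (n + d - e) (by omega) _ (SetLike.coe_mem _))
    rw [hsum, Finset.sum_smul]
    refine Finset.sum_eq_zero fun i _ => ?_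
    have hbg : b i • g = 0 := by
      have h := SetLike.GradedSMul.smul_mem (A := 𝒜) (B := ℳ) (hb i) hge
      rwa [vadd_eq_add, show n + d - e - d + e = n by omega, hbot, Submodule.mem_bot] at h
    rw [mul_smul, hbg, smul_zero]

end GradedRing

theorem stmt_6_general {S M : Type*} [CommRing S] [AddCommGroup M] [Module S M]
    (𝒜 : ℕ → AddSubgroup S) [GradedRing 𝒜]
    (S0 : Subring S)
    (ℳ : ℕ → Submodule S0 M) [SetLike.GradedSMul 𝒜 ℳ] [DirectSum.Decomposition ℳ]
    [Module.Finite S M]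
    {t : ℕ} (x : Fin t → S) (dx : Fin t → ℕ) (hdx : ∀ i, 0 < dx i)
    (hxdeg : ∀ i, x i ∈ 𝒜 (dx i))
    (hgen : Subring.closure ((𝒜 0 : Set S) ∪ Set.range x) = ⊤) :
    (∃ N : ℕ, ∀ n ≥ N, ℳ n = ⊥) ∨
    (0 < Finset.univ.lcm dx ∧ ∃ j < Finset.univ.lcm dx, ∃ m₀ : ℕ,
      ∀ n ≥ m₀, n % Finset.univ.lcm dx = j → ℳ n ≠ ⊥) := by
  set d := Finset.univ.lcm dx
  have hd : 0 < d := Nat.pos_of_ne_zero fun h => by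
    obtain ⟨i, -, hi⟩ := Finset.lcm_eq_zero_iff.mp h
    exact (hdx i).ne' hi
  have hy (i : Fin t) : x i ^ (d / dx i) ∈ 𝒜 d := by
    have h := SetLike.pow_mem_graded (d / dx i) (hxdeg i)
    rwa [smul_eq_mul, Nat.div_mul_cancel (Finset.dvd_lcm (Finset.mem_univ i))] at h
  obtain ⟨N, hN⟩ := exists_forall_ge_grade_add_eq_bot 𝒜 ℳ hy (N₀ := t * d + 1)
    fun q hq a ha => mem_span_pow_of_mem_grade 𝒜 hxdeg hgen (by simpa using hq) ha
  exact (Nat.eventually_or_exists_mod_eq_eventually_not hd hN).imp_right fun h => ⟨hd, h⟩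

/-- Let `S` be a non-negatively graded commutative Noetherian ring and
`M` a finitely generated non-negatively graded `S`-module such that each graded
component `ℳ n` has finite length over the degree-zero subring `S0`.  Then either
`ℳ n = 0` for all `n ≫ 0`, or there are integers `d > 0`, `m₀` and `j` with `0 ≤ j < d`
such that `ℳ n ≠ 0` for every `n ≥ m₀` with `n ≡ j (mod d)`; moreover `d` may be taken
to be the lcm of the degrees of any homogeneous generating set of positive degrees of
`S` over `S⁰`. -/
theorem stmt_6 {S M : Type*} [CommRing S] [AddCommGroup M] [Module S M]
    (𝒜 : ℕ → AddSubgroup S) [GradedRing 𝒜] [IsNoetherianRing S]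
    (S0 : Subring S) (hS0 : (S0 : Set S) = (𝒜 0 : Set S))
    (ℳ : ℕ → Submodule S0 M) [SetLike.GradedSMul 𝒜 ℳ] [DirectSum.Decomposition ℳ]
    [Module.Finite S M]
    (hlen : ∀ n : ℕ, IsFiniteLength S0 (ℳ n))
    {t : ℕ} (x : Fin t → S) (dx : Fin t → ℕ) (hdx : ∀ i, 0 < dx i)
    (hxdeg : ∀ i, x i ∈ 𝒜 (dx i))
    (hgen : Subring.closure ((𝒜 0 : Set S) ∪ Set.range x) = ⊤) :
    (∃ N : ℕ, ∀ n ≥ N, ℳ n = ⊥) ∨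
    (0 < Finset.univ.lcm dx ∧ ∃ j < Finset.univ.lcm dx, ∃ m₀ : ℕ,
      ∀ n ≥ m₀, n % Finset.univ.lcm dx = j → ℳ n ≠ ⊥) :=
  stmt_6_general 𝒜 S0 ℳ x dx hdx hxdeg hgen
end
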